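/- arXiv:2508.12858 — 4 statements merged into one kernel-verified Lean document; each statement's English description precedes it below -/
import Mathlib

section
/- If U_N is an (α, m, ε)-block encoding of Λ_N^{T1} and U^ρ is a unitary preparing a purification of ρ (U^ρ|0^{r+n}⟩ = |ψ⟩ with Tr_{C^{2^r}}|ψ⟩⟨ψ| = ρ), then (I_m ⊗ U^{ρ†} ⊗ I_k)(U_N ⊗ I_r)(I_m ⊗ U^ρ ⊗ I_k) is an (α, m+r+n, ε)-block encoding of N(ρ). -/
/-! Split the prepared state `U^ρ|0⟩` along the purifying register into vectors `ψ_a`, so that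
`ρ = Σ_a |ψ_a⟩⟨ψ_a|`, and let `K_a = |ψ_a⟩ ⊗ I`. Both `N(ρ)` and the top-left corner of the circuit
are then compressions `Σ_a K_a† X K_a`, with `X = Λ_N^{T1}` and `X` the top-left corner of `U_N`
respectively. Hence the error is `Σ_a K_a† D K_a` for the block-encoding error `D`, whose norm is at
most `Σ_a ‖K_a‖² ‖D‖ ≤ Σ_a ‖ψ_a‖² ‖D‖ = ‖D‖`, since `U^ρ|0⟩` is a unit vector. -/

open Matrix MeasureTheory
open scoped Kronecker ComplexOrder

/-- Operator (spectral) norm of a complex matrix. -/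
noncomputable def opNorm {m n : Type*} [Fintype m] [Fintype n] [DecidableEq n]
    (A : Matrix m n ℂ) : ℝ :=
  ‖(Matrix.toEuclideanLin A).toContinuousLinearMap‖

/-- Choi matrix `Λ_N = Σ_{ij} |i⟩⟨j| ⊗ N(|i⟩⟨j|)`. -/
noncomputable def choi {ι κ : Type*} [Fintype ι] [DecidableEq ι]
    (N : Matrix ι ι ℂ →ₗ[ℂ] Matrix κ κ ℂ) : Matrix (ι × κ) (ι × κ) ℂ :=
  fun p q => N (Matrix.single p.1 q.1 1) p.2 q.2

/-- Partial transpose on the first tensor factor. -/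
def ptrans1 {ι κ : Type*} (M : Matrix (ι × κ) (ι × κ) ℂ) : Matrix (ι × κ) (ι × κ) ℂ :=
  fun p q => M (q.1, p.2) (p.1, q.2)

/-- Partially transposed Choi matrix `Λ_N^{T1}`. -/
noncomputable def choiT1 {ι κ : Type*} [Fintype ι] [DecidableEq ι]
    (N : Matrix ι ι ℂ →ₗ[ℂ] Matrix κ κ ℂ) : Matrix (ι × κ) (ι × κ) ℂ :=
  ptrans1 (choi N)

/-- The swap operator `S(u ⊗ v) = v ⊗ u` as a matrix. -/
def swapOp (ι : Type*) [DecidableEq ι] : Matrix (ι × ι) (ι × ι) ℂ :=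
  fun p q => if p.1 = q.2 ∧ p.2 = q.1 then 1 else 0

-- With this norm, `opNorm A` is definitionally `‖A‖`.
open scoped Matrix.Norms.L2Operator

section VecKronOne

variable {ι : Type*} (κ : Type*) [Fintype ι] [Fintype κ] [DecidableEq κ]

def vecKronOne (v : ι → ℂ) : Matrix (ι × κ) κ ℂ :=
  of fun p z => v p.1 * (1 : Matrix κ κ ℂ) p.2 z

theorem vecKronOne_conjTranspose_mul_mul_apply (v : ι → ℂ) (D : Matrix (ι × κ) (ι × κ) ℂ)
    (x y : κ) :
    ((vecKronOne κ v)ᴴ * D * vecKronOne κ v) x y =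
      ∑ i, ∑ j, star (v i) * D (i, x) (j, y) * v j := by
  simp only [vecKronOne, one_apply, mul_ite, mul_one, mul_zero, mul_apply, conjTranspose_apply,
    of_apply, RCLike.star_def, apply_ite (starRingEnd ℂ), map_zero, ite_mul, zero_mul,
    Fintype.sum_prod_type, Finset.sum_ite_eq', Finset.mem_univ, ↓reduceIte, Finset.sum_mul]
  exact Finset.sum_comm

theorem vecKronOne_conjTranspose_mul_self (v : ι → ℂ) :
    (vecKronOne κ v)ᴴ * vecKronOne κ v = ((∑ i, ‖v i‖ ^ 2 : ℝ) : ℂ) • (1 : Matrix κ κ ℂ) := by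
  ext x y
  simp [vecKronOne, mul_apply, Fintype.sum_prod_type, one_apply, apply_ite (starRingEnd ℂ),
    eq_comm, Complex.conj_mul']

theorem norm_vecKronOne_sq_le (v : ι → ℂ) : ‖vecKronOne κ v‖ ^ 2 ≤ ∑ i, ‖v i‖ ^ 2 := by
  have h_one : ‖(1 : Matrix κ κ ℂ)‖ ≤ 1 := by
    rw [cstar_norm_def, map_one]
    exact ContinuousLinearMap.norm_id_le
  rw [sq, ← l2_opNorm_conjTranspose_mul_self, vecKronOne_conjTranspose_mul_self, norm_smul,
    Complex.norm_real, Real.norm_of_nonneg (by positivity)]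
  exact mul_le_of_le_one_right (by positivity) h_one

end VecKronOne

theorem l2_opNorm_conjTranspose_mul_mul_le {m n : Type*} [Fintype m] [Fintype n]
    [DecidableEq m] [DecidableEq n] (K : Matrix m n ℂ) (D : Matrix m m ℂ) :
    ‖Kᴴ * D * K‖ ≤ ‖K‖ ^ 2 * ‖D‖ :=
  calc ‖Kᴴ * D * K‖ ≤ ‖Kᴴ‖ * ‖D‖ * ‖K‖ :=
        (l2_opNorm_mul _ _).trans (by gcongr; exact l2_opNorm_mul _ _)
    _ = ‖K‖ ^ 2 * ‖D‖ := by rw [l2_opNorm_conjTranspose]; ring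

theorem norm_sum_vecKronOne_conj_le {ι κ σ : Type*} [Fintype ι] [DecidableEq ι] [Fintype κ]
    [DecidableEq κ] [Fintype σ] (ψ : σ → ι → ℂ) (D : Matrix (ι × κ) (ι × κ) ℂ) :
    ‖∑ a, (vecKronOne κ (ψ a))ᴴ * D * vecKronOne κ (ψ a)‖ ≤ (∑ a, ∑ i, ‖ψ a i‖ ^ 2) * ‖D‖ :=
  calc ‖∑ a, (vecKronOne κ (ψ a))ᴴ * D * vecKronOne κ (ψ a)‖
      ≤ ∑ a, ‖vecKronOne κ (ψ a)‖ ^ 2 * ‖D‖ :=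
        (norm_sum_le _ _).trans <|
          Finset.sum_le_sum fun a _ => l2_opNorm_conjTranspose_mul_mul_le _ _
    _ ≤ ∑ a, (∑ i, ‖ψ a i‖ ^ 2) * ‖D‖ := by gcongr with a; exact norm_vecKronOne_sq_le κ (ψ a)
    _ = (∑ a, ∑ i, ‖ψ a i‖ ^ 2) * ‖D‖ := (Finset.sum_mul ..).symm

theorem sum_norm_sq_apply_of_mem_unitaryGroup {𝕜 n : Type*} [RCLike 𝕜] [Fintype n]
    [DecidableEq n] {U : Matrix n n 𝕜} (hU : U ∈ unitaryGroup n 𝕜) (j : n) :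
    ∑ i, ‖U i j‖ ^ 2 = 1 := by
  have h : (star U * U) j j = 1 := by rw [mem_unitaryGroup_iff'.mp hU, one_apply_eq]
  simp only [star_eq_conjTranspose, mul_apply, conjTranspose_apply,
    RCLike.star_def, RCLike.conj_mul] at h
  exact_mod_cast h

theorem apply_apply_eq_sum_choiT1 {ι κ : Type*} [Fintype ι] [DecidableEq ι]
    (N : Matrix ι ι ℂ →ₗ[ℂ] Matrix κ κ ℂ) (ρ : Matrix ι ι ℂ) (x y : κ) :
    N ρ x y = ∑ i, ∑ j, ρ j i * choiT1 N (i, x) (j, y) := by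
  conv_lhs => rw [matrix_eq_sum_single ρ]
  simp only [map_sum, Matrix.sum_apply]
  rw [Finset.sum_comm]
  refine Fintype.sum_congr _ _ fun i => Fintype.sum_congr _ _ fun j => ?_
  have h_single : single j i (ρ j i) = ρ j i • single j i 1 := by
    rw [smul_single, smul_eq_mul, mul_one]
  rw [h_single, map_smul, Matrix.smul_apply, smul_eq_mul]
  rfl

theorem apply_eq_sum_conj_choiT1_of_purification {ι κ σ : Type*} [Fintype ι] [DecidableEq ι]
    [Fintype κ] [DecidableEq κ] [Fintype σ] (N : Matrix ι ι ℂ →ₗ[ℂ] Matrix κ κ ℂ)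
    (ψ : σ → ι → ℂ) (ρ : Matrix ι ι ℂ) (hρ : ∀ i j, ρ i j = ∑ a, ψ a i * star (ψ a j)) :
    N ρ = ∑ a, (vecKronOne κ (ψ a))ᴴ * choiT1 N * vecKronOne κ (ψ a) := by
  ext x y
  simp only [Matrix.sum_apply, vecKronOne_conjTranspose_mul_mul_apply,
    apply_apply_eq_sum_choiT1 N ρ, hρ, Finset.sum_mul]
  calc _ = ∑ i, ∑ a, ∑ j, star (ψ a i) * choiT1 N (i, x) (j, y) * ψ a j :=
        Finset.sum_congr rfl fun i _ => Finset.sum_comm.trans <|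
          Finset.sum_congr rfl fun a _ => Finset.sum_congr rfl fun j _ => by ring
    _ = _ := Finset.sum_comm

theorem circuit_corner_eq_sum_conj {μ σ ι κ : Type*} [Fintype μ] [Fintype σ] [Fintype ι]
    [Fintype κ] [DecidableEq μ] [DecidableEq σ] [DecidableEq κ] [Zero μ] [Zero σ] [Zero ι]
    (UN : Matrix (μ × ι × κ) (μ × ι × κ) ℂ) (Uρ : Matrix (σ × ι) (σ × ι) ℂ)
    (A B C : Matrix (μ × σ × ι × κ) (μ × σ × ι × κ) ℂ)
    (hA : ∀ p q, A p q = if p.1 = q.1 ∧ p.2.2.2 = q.2.2.2 then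
        Uρᴴ (p.2.1, p.2.2.1) (q.2.1, q.2.2.1) else 0)
    (hB : ∀ p q, B p q = if p.2.1 = q.2.1 then
        UN (p.1, p.2.2.1, p.2.2.2) (q.1, q.2.2.1, q.2.2.2) else 0)
    (hC : ∀ p q, C p q = if p.1 = q.1 ∧ p.2.2.2 = q.2.2.2 then
        Uρ (p.2.1, p.2.2.1) (q.2.1, q.2.2.1) else 0) :
    of (fun x y : κ => (A * B * C) (0, 0, 0, x) (0, 0, 0, y)) =
      ∑ a, (vecKronOne κ fun i => Uρ (a, i) (0, 0))ᴴ * of (fun p q => UN (0, p) (0, q)) *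
        vecKronOne κ fun i => Uρ (a, i) (0, 0) := by
  ext x y
  simp only [of_apply, Matrix.sum_apply, vecKronOne_conjTranspose_mul_mul_apply]
  simp only [mul_apply, hA, hB, hC, conjTranspose_apply, RCLike.star_def, ite_and, Prod.mk.eta,
    mul_ite, ite_mul, zero_mul, mul_zero, Fintype.sum_prod_type, Finset.sum_ite_irrel,
    Finset.sum_ite_eq, Finset.sum_ite_eq', Finset.mem_univ, ↓reduceIte, Finset.sum_const_zero,
    Finset.sum_mul]
  exact Fintype.sum_congr _ _ fun _ => Finset.sum_comm

theorem belt_main_general {m r n k : ℕ} (α ε : ℝ)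
    (N : Matrix (Fin (2 ^ n)) (Fin (2 ^ n)) ℂ →ₗ[ℂ] Matrix (Fin (2 ^ k)) (Fin (2 ^ k)) ℂ)
    (UN : Matrix (Fin (2 ^ m) × Fin (2 ^ n) × Fin (2 ^ k))
        (Fin (2 ^ m) × Fin (2 ^ n) × Fin (2 ^ k)) ℂ)
    (hBE : opNorm (choiT1 N - α •
        Matrix.of (fun p q : Fin (2 ^ n) × Fin (2 ^ k) => UN (0, p) (0, q))) ≤ ε)
    (Uρ : Matrix (Fin (2 ^ r) × Fin (2 ^ n)) (Fin (2 ^ r) × Fin (2 ^ n)) ℂ)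
    (hUρ : Uρ ∈ Matrix.unitaryGroup (Fin (2 ^ r) × Fin (2 ^ n)) ℂ)
    (ρ : Matrix (Fin (2 ^ n)) (Fin (2 ^ n)) ℂ)
    -- `ψ = U^ρ |0^{r+n}⟩` purifies `ρ`:
    (hρ : ∀ i j, ρ i j = ∑ a : Fin (2 ^ r), Uρ (a, i) (0, 0) * star (Uρ (a, j) (0, 0)))
    (A B C V : Matrix (Fin (2 ^ m) × Fin (2 ^ r) × Fin (2 ^ n) × Fin (2 ^ k))
        (Fin (2 ^ m) × Fin (2 ^ r) × Fin (2 ^ n) × Fin (2 ^ k)) ℂ)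
    -- `A = I_m ⊗ U^{ρ†} ⊗ I_k`
    (hA : ∀ p q, A p q = if p.1 = q.1 ∧ p.2.2.2 = q.2.2.2 then
        Uρᴴ (p.2.1, p.2.2.1) (q.2.1, q.2.2.1) else 0)
    -- `B = U_N ⊗ I_r` (with `U_N` acting on the `m`, `n`, `k` registers)
    (hB : ∀ p q, B p q = if p.2.1 = q.2.1 then
        UN (p.1, p.2.2.1, p.2.2.2) (q.1, q.2.2.1, q.2.2.2) else 0)
    -- `C = I_m ⊗ U^ρ ⊗ I_k`
    (hC : ∀ p q, C p q = if p.1 = q.1 ∧ p.2.2.2 = q.2.2.2 then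
        Uρ (p.2.1, p.2.2.1) (q.2.1, q.2.2.1) else 0)
    (hV : V = A * B * C) :
    opNorm (N ρ - α •
        Matrix.of (fun x y : Fin (2 ^ k) => V (0, 0, 0, x) (0, 0, 0, y))) ≤ ε := by
  set ψ : Fin (2 ^ r) → Fin (2 ^ n) → ℂ := fun a i => Uρ (a, i) (0, 0)
  set D := choiT1 N - α • Matrix.of (fun p q : Fin (2 ^ n) × Fin (2 ^ k) => UN (0, p) (0, q))
  have hψ : ∑ a, ∑ i, ‖ψ a i‖ ^ 2 = 1 := by
    rw [← Fintype.sum_prod_type', sum_norm_sq_apply_of_mem_unitaryGroup hUρ (0, 0)]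
  have h_error : N ρ - α • Matrix.of (fun x y : Fin (2 ^ k) => V (0, 0, 0, x) (0, 0, 0, y)) =
      ∑ a, (vecKronOne (Fin (2 ^ k)) (ψ a))ᴴ * D * vecKronOne (Fin (2 ^ k)) (ψ a) := by
    rw [apply_eq_sum_conj_choiT1_of_purification N ψ ρ hρ, hV,
      circuit_corner_eq_sum_conj UN Uρ A B C hA hB hC, Finset.smul_sum, ← Finset.sum_sub_distrib]
    simp only [D, Matrix.mul_sub, Matrix.sub_mul, Matrix.mul_smul, Matrix.smul_mul]
    rfl
  calc opNorm (N ρ - α • Matrix.of (fun x y : Fin (2 ^ k) => V (0, 0, 0, x) (0, 0, 0, y)))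
      ≤ (∑ a, ∑ i, ‖ψ a i‖ ^ 2) * ‖D‖ := h_error ▸ norm_sum_vecKronOne_conj_le ψ D
    _ ≤ ε := by rw [hψ, one_mul]; exact hBE

/-- BELT: if `U_N` is an `(α,m,ε)`-block encoding of `Λ_N^{T1}` and `U^ρ`
prepares a purification of `ρ` from `|0^{r+n}⟩`, then the circuit
`(I_m ⊗ U^{ρ†} ⊗ I_k)(U_N ⊗ I_r)(I_m ⊗ U^ρ ⊗ I_k)` is an `(α, m+r+n, ε)`-block
encoding of `N(ρ)`.  Register order: ancilla (m), purifying (r), input (n), output (k). -/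
theorem belt_main {m r n k : ℕ} (α ε : ℝ) (hα : 0 ≤ α) (hε : 0 ≤ ε)
    (N : Matrix (Fin (2 ^ n)) (Fin (2 ^ n)) ℂ →ₗ[ℂ] Matrix (Fin (2 ^ k)) (Fin (2 ^ k)) ℂ)
    (UN : Matrix (Fin (2 ^ m) × Fin (2 ^ n) × Fin (2 ^ k))
        (Fin (2 ^ m) × Fin (2 ^ n) × Fin (2 ^ k)) ℂ)
    (hUN : UN ∈ Matrix.unitaryGroup (Fin (2 ^ m) × Fin (2 ^ n) × Fin (2 ^ k)) ℂ)
    (hBE : opNorm (choiT1 N - α •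
        Matrix.of (fun p q : Fin (2 ^ n) × Fin (2 ^ k) => UN (0, p) (0, q))) ≤ ε)
    (Uρ : Matrix (Fin (2 ^ r) × Fin (2 ^ n)) (Fin (2 ^ r) × Fin (2 ^ n)) ℂ)
    (hUρ : Uρ ∈ Matrix.unitaryGroup (Fin (2 ^ r) × Fin (2 ^ n)) ℂ)
    (ρ : Matrix (Fin (2 ^ n)) (Fin (2 ^ n)) ℂ)
    -- `ψ = U^ρ |0^{r+n}⟩` purifies `ρ`:
    (hρ : ∀ i j, ρ i j = ∑ a : Fin (2 ^ r), Uρ (a, i) (0, 0) * star (Uρ (a, j) (0, 0)))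
    (A B C V : Matrix (Fin (2 ^ m) × Fin (2 ^ r) × Fin (2 ^ n) × Fin (2 ^ k))
        (Fin (2 ^ m) × Fin (2 ^ r) × Fin (2 ^ n) × Fin (2 ^ k)) ℂ)
    -- `A = I_m ⊗ U^{ρ†} ⊗ I_k`
    (hA : ∀ p q, A p q = if p.1 = q.1 ∧ p.2.2.2 = q.2.2.2 then
        Uρᴴ (p.2.1, p.2.2.1) (q.2.1, q.2.2.1) else 0)
    -- `B = U_N ⊗ I_r` (with `U_N` acting on the `m`, `n`, `k` registers)
    (hB : ∀ p q, B p q = if p.2.1 = q.2.1 then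
        UN (p.1, p.2.2.1, p.2.2.2) (q.1, q.2.2.1, q.2.2.2) else 0)
    -- `C = I_m ⊗ U^ρ ⊗ I_k`
    (hC : ∀ p q, C p q = if p.1 = q.1 ∧ p.2.2.2 = q.2.2.2 then
        Uρ (p.2.1, p.2.2.1) (q.2.1, q.2.2.1) else 0)
    (hV : V = A * B * C) :
    opNorm (N ρ - α •
        Matrix.of (fun x y : Fin (2 ^ k) => V (0, 0, 0, x) (0, 0, 0, y))) ≤ ε :=
  belt_main_general α ε N UN hBE Uρ hUρ ρ hρ A B C V hA hB hC hV
end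

section
/- For any pure state ψ = |ψ⟩⟨ψ| on C^{d_A} ⊗ C^{d_B}, one has |Tr[((R⊗I)(ψ)) ψ ((R⊗I)(ψ))] − 1| ≤ 2‖Tr_A(ψ)‖_∞, where R(X) = Tr(X)I − X and Tr_A denotes the partial trace over the first factor. -/
open Matrix MeasureTheory
open scoped Kronecker ComplexOrder

/-!
Write `τ = Tr_A ψ` and `K = 1 ⊗ τ`. Since `ψ` is a rank-one projection, `ψ² = ψ`, and
`Tr[(1 ⊗ B) ψ] = Tr[B τ]`, so expanding `(K - ψ) ψ (K - ψ)` gives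
`Tr[M ψ M] - 1 = Tr τ³ - 2 Tr τ²`. The eigenvalues `λᵢ` of the density matrix `τ` lie in
`[0, ‖τ‖_∞]` and sum to `1`, so this equals `-∑ λᵢ² (2 - λᵢ)`, whose absolute value is at most
`2 ∑ λᵢ² ≤ 2 ‖τ‖_∞ ∑ λᵢ = 2 ‖τ‖_∞`.
-/

section PartialTrace

variable {ι κ R : Type*} [Fintype ι]

def partialTraceLeft [AddCommMonoid R] (X : Matrix (ι × κ) (ι × κ) R) : Matrix κ κ R :=
  of fun b b' => ∑ a, X (a, b) (a, b')

lemma partialTraceLeft_eq_sum_submatrix [AddCommMonoid R] (X : Matrix (ι × κ) (ι × κ) R) :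
    partialTraceLeft X = ∑ a, X.submatrix (Prod.mk a) (Prod.mk a) := by
  ext b b'
  simp [partialTraceLeft, Matrix.sum_apply]

lemma Matrix.PosSemidef.partialTraceLeft [Ring R] [PartialOrder R] [StarRing R]
    [AddLeftMono R] {X : Matrix (ι × κ) (ι × κ) R} (hX : X.PosSemidef) :
    (partialTraceLeft X).PosSemidef := by
  rw [partialTraceLeft_eq_sum_submatrix]
  exact posSemidef_sum _ fun a _ => hX.submatrix _

variable [Fintype κ]

lemma trace_partialTraceLeft [AddCommMonoid R] (X : Matrix (ι × κ) (ι × κ) R) :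
    (partialTraceLeft X).trace = X.trace := by
  simp [partialTraceLeft, Matrix.trace, Fintype.sum_prod_type, Finset.sum_comm (γ := ι)]

lemma trace_one_kronecker_mul [DecidableEq ι] [CommSemiring R] (B : Matrix κ κ R)
    (X : Matrix (ι × κ) (ι × κ) R) :
    ((1 ⊗ₖ B) * X).trace = (B * partialTraceLeft X).trace := by
  simp only [trace, diag_apply, mul_apply, kroneckerMap_apply, one_apply, ite_mul, one_mul,
    zero_mul, Fintype.sum_prod_type, Finset.sum_ite_irrel, Finset.sum_const_zero,
    Finset.sum_ite_eq, Finset.mem_univ, ↓reduceIte, partialTraceLeft, of_apply, Finset.mul_sum]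
  exact Finset.sum_comm.trans (Finset.sum_congr rfl fun _ _ => Finset.sum_comm)

/-- `(R ⊗ id)(X)` for the reduction map `R(Y) = Tr(Y) • 1 - Y`. -/
def reductionLeft [DecidableEq ι] [Ring R] (X : Matrix (ι × κ) (ι × κ) R) :
    Matrix (ι × κ) (ι × κ) R :=
  1 ⊗ₖ partialTraceLeft X - X

end PartialTrace

section Reduction

variable {ι κ R : Type*} [Fintype ι] [Fintype κ] [DecidableEq ι] [DecidableEq κ] [CommRing R]

lemma trace_reductionLeft_mul_mul_reductionLeft {ψ : Matrix (ι × κ) (ι × κ) R}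
    (hψ : IsIdempotentElem ψ) (htr : ψ.trace = 1) :
    (reductionLeft ψ * ψ * reductionLeft ψ).trace =
      (partialTraceLeft ψ ^ 3).trace - 2 * (partialTraceLeft ψ ^ 2).trace + 1 := by
  set K : Matrix (ι × κ) (ι × κ) R := 1 ⊗ₖ partialTraceLeft ψ
  have hK : (K * ψ).trace = (partialTraceLeft ψ ^ 2).trace := by
    rw [trace_one_kronecker_mul, sq]
  have hKK : (K * ψ * K).trace = (partialTraceLeft ψ ^ 3).trace := by
    rw [trace_mul_cycle, ← mul_kronecker_mul, one_mul, trace_one_kronecker_mul, pow_succ, sq]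
  have hexpand : reductionLeft ψ * ψ * reductionLeft ψ = K * ψ * K - K * ψ - ψ * K + ψ := by
    calc reductionLeft ψ * ψ * reductionLeft ψ
        = K * ψ * K - K * (ψ * ψ) - ψ * ψ * K + ψ * ψ * ψ := by
          simp only [reductionLeft]; noncomm_ring
      _ = K * ψ * K - K * ψ - ψ * K + ψ := by simp only [hψ.eq]
  rw [hexpand, trace_add, trace_sub, trace_sub, trace_mul_comm ψ K, hKK, hK, htr]
  ring

end Reduction

section Spectral

lemma abs_sum_pow_three_sub_two_mul_sum_sq_le {n : Type*} [Fintype n] {μ : n → ℝ} {L : ℝ}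
    (hμ : ∀ i, 0 ≤ μ i) (hsum : ∑ i, μ i = 1) (hL : ∀ i, μ i ≤ L) :
    |∑ i, μ i ^ 3 - 2 * ∑ i, μ i ^ 2| ≤ 2 * L := by
  have hμ1 : ∀ i, μ i ≤ 1 := fun i =>
    hsum ▸ Finset.single_le_sum (fun j _ => hμ j) (Finset.mem_univ i)
  have hlower : ∑ i, (2 * μ i ^ 2 - μ i ^ 3) ≤ ∑ i, 2 * L * μ i :=
    Finset.sum_le_sum fun i _ => by nlinarith [hμ i, hL i, sq_nonneg (μ i)]
  have hupper : ∑ i, (μ i ^ 3 - 2 * μ i ^ 2) ≤ 0 :=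
    Finset.sum_nonpos fun i _ => by nlinarith [hμ i, hμ1 i, sq_nonneg (μ i)]
  rw [Finset.sum_sub_distrib, ← Finset.mul_sum, ← Finset.mul_sum, hsum] at hlower
  rw [Finset.sum_sub_distrib, ← Finset.mul_sum] at hupper
  rw [abs_le]
  constructor <;> linarith

variable {n 𝕜 : Type*} [Fintype n] [DecidableEq n] [RCLike 𝕜]

lemma Matrix.IsHermitian.trace_pow {A : Matrix n n 𝕜} (hA : A.IsHermitian) (k : ℕ) :
    (A ^ k).trace = ∑ i, (hA.eigenvalues i : 𝕜) ^ k := by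
  rw [← cfc_pow_id (R := ℝ) A k hA.isSelfAdjoint, hA.cfc_eq, IsHermitian.cfc,
    Unitary.conjStarAlgAut_apply, trace_mul_cycle, Unitary.coe_star_mul_self, one_mul, trace_diagonal]
  simp

lemma Matrix.IsHermitian.abs_eigenvalues_le_opNorm {A : Matrix n n ℂ} (hA : A.IsHermitian)
    (i : n) : |hA.eigenvalues i| ≤ opNorm A := by
  have hunit : ‖hA.eigenvectorBasis i‖ = 1 := hA.eigenvectorBasis.orthonormal.1 i
  have heigen : toEuclideanLin A (hA.eigenvectorBasis i) =
      (hA.eigenvalues i : ℂ) • hA.eigenvectorBasis i := by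
    apply (WithLp.equiv 2 (n → ℂ)).injective
    simpa using hA.mulVec_eigenvectorBasis i
  simpa [opNorm, heigen, norm_smul, hunit] using
    (toEuclideanLin A).toContinuousLinearMap.le_opNorm (hA.eigenvectorBasis i)

lemma Matrix.PosSemidef.norm_trace_pow_three_sub_two_mul_trace_sq_le {τ : Matrix n n ℂ}
    (hτ : τ.PosSemidef) (htr : τ.trace = 1) :
    ‖(τ ^ 3).trace - 2 * (τ ^ 2).trace‖ ≤ 2 * opNorm τ := by
  have hsum : ∑ i, hτ.1.eigenvalues i = 1 := by
    have h := hτ.1.trace_eq_sum_eigenvalues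
    rw [htr, RCLike.ofReal_eq_complex_ofReal] at h
    exact_mod_cast h.symm
  have hreal : (τ ^ 3).trace - 2 * (τ ^ 2).trace =
      ((∑ i, hτ.1.eigenvalues i ^ 3 - 2 * ∑ i, hτ.1.eigenvalues i ^ 2 : ℝ) : ℂ) := by
    rw [hτ.1.trace_pow, hτ.1.trace_pow, RCLike.ofReal_eq_complex_ofReal]
    push_cast
    ring
  rw [hreal, Complex.norm_real, Real.norm_eq_abs]
  exact abs_sum_pow_three_sub_two_mul_sum_sq_le hτ.eigenvalues_nonneg hsum
    fun i => (le_abs_self _).trans (hτ.1.abs_eigenvalues_le_opNorm i)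

end Spectral

lemma isIdempotentElem_vecMulVec_star {n R : Type*} [Fintype n] [CommSemiring R] [StarRing R]
    {v : n → R} (hv : star v ⬝ᵥ v = 1) : IsIdempotentElem (vecMulVec v (star v)) := by
  rw [IsIdempotentElem, vecMulVec_mul_vecMulVec, hv, one_smul]

lemma star_dotProduct_self_eq_one {n : Type*} [Fintype n] {v : n → ℂ}
    (hv : ∑ p, ‖v p‖ ^ 2 = 1) : star v ⬝ᵥ v = 1 := by
  simp only [dotProduct, Pi.star_apply, Complex.star_def, Complex.conj_mul']
  exact_mod_cast hv

/-- for any pure state `ψ` on `ℂ^{dA} ⊗ ℂ^{dB}`, with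
`M = (R⊗I)(ψ) = I_A ⊗ Tr_A(ψ) − ψ`, one has
`|Tr[M ψ M] − 1| ≤ 2 ‖Tr_A(ψ)‖_∞`. -/
theorem reduction_trace_bound {dA dB : ℕ}
    (v : Fin dA × Fin dB → ℂ) (hv : ∑ p, ‖v p‖ ^ 2 = 1)
    (ψ : Matrix (Fin dA × Fin dB) (Fin dA × Fin dB) ℂ)
    (hψ : ∀ p q, ψ p q = v p * star (v q))
    (τ : Matrix (Fin dB) (Fin dB) ℂ)
    (hτ : ∀ b b', τ b b' = ∑ a : Fin dA, ψ (a, b) (a, b'))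
    (M : Matrix (Fin dA × Fin dB) (Fin dA × Fin dB) ℂ)
    (hM : ∀ p q, M p q = (if p.1 = q.1 then τ p.2 q.2 else 0) - ψ p q) :
    ‖(M * ψ * M).trace - 1‖ ≤ 2 * opNorm τ := by
  have hunit := star_dotProduct_self_eq_one hv
  obtain rfl : ψ = vecMulVec v (star v) := ext fun p q => by simp [hψ, vecMulVec_apply]
  obtain rfl : τ = partialTraceLeft (vecMulVec v (star v)) := ext hτ
  obtain rfl : M = reductionLeft (vecMulVec v (star v)) := ext fun p q => by
    simp [hM, reductionLeft, one_apply]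
  have htr : (vecMulVec v (star v)).trace = 1 := by rw [trace_vecMulVec, dotProduct_comm, hunit]
  rw [trace_reductionLeft_mul_mul_reductionLeft (isIdempotentElem_vecMulVec_star hunit) htr,
    add_sub_cancel_right]
  have hτ : (partialTraceLeft (vecMulVec v (star v))).PosSemidef :=
    (posSemidef_vecMulVec_self_star v).partialTraceLeft
  exact hτ.norm_trace_pow_three_sub_two_mul_trace_sq_le (by rw [trace_partialTraceLeft, htr])
end

section
/- If E is an invertible completely positive trace-preserving map on M_d(C) that is not unitary conjugation, then its inverse E^{-1} is Hermitian-preserving and trace-preserving but not completely positive. -/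
open Matrix MeasureTheory
open scoped Kronecker ComplexOrder

/-- Ampliation `(id_l ⊗ N)(X)` of a linear map on matrices. -/
noncomputable def ampliate {d k : ℕ}
    (N : Matrix (Fin d) (Fin d) ℂ →ₗ[ℂ] Matrix (Fin k) (Fin k) ℂ) (l : ℕ)
    (X : Matrix (Fin l × Fin d) (Fin l × Fin d) ℂ) :
    Matrix (Fin l × Fin k) (Fin l × Fin k) ℂ :=
  fun p q => N (Matrix.of fun i j => X (p.1, i) (q.1, j)) p.2 q.2

/-- Complete positivity: every ampliation `id_l ⊗ N` maps positive semidefinite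
matrices to positive semidefinite matrices. -/
def IsCompletelyPositive {d k : ℕ}
    (N : Matrix (Fin d) (Fin d) ℂ →ₗ[ℂ] Matrix (Fin k) (Fin k) ℂ) : Prop :=
  ∀ (l : ℕ) (X : Matrix (Fin l × Fin d) (Fin l × Fin d) ℂ),
    X.PosSemidef → (ampliate N l X).PosSemidef

/-!
A completely positive map has a Kraus form `E X = ∑ r, A r * X * (A r)ᴴ`, read off from a
factorisation `Bᴴ * B` of its Choi matrix. The Kraus form makes `E` Hermitian-preserving, and
Hermitian and trace preservation pass to any two-sided inverse. If `E⁻¹` were completely positive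
as well, with Kraus operators `B s`, the products `B s * A r` would be Kraus operators of the
identity map; evaluating on matrix units forces each of them to be a scalar. A nonzero one makes
`A r₀` invertible and every `A r` a multiple of it, so `E` is conjugation by a multiple `V` of
`A r₀`, and trace preservation gives `Vᴴ * V = 1`.
-/

lemma posSemidef_choi_of_isCompletelyPositive {d k : ℕ}
    {N : Matrix (Fin d) (Fin d) ℂ →ₗ[ℂ] Matrix (Fin k) (Fin k) ℂ}
    (h : IsCompletelyPositive N) : (choi N).PosSemidef := by
  -- the Choi matrix is the ampliation of the projector onto `w = ∑ i, e i ⊗ e i`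
  let w : Fin d × Fin d → ℂ := fun p => if p.1 = p.2 then 1 else 0
  convert h d _ (posSemidef_vecMulVec_self_star w) using 1
  ext p q
  simp only [choi, ampliate, vecMulVec_apply, Pi.star_apply, w]
  exact congrFun (congrFun (congrArg N (by ext i j; simp [single, ← ite_and, and_comm])) p.2) q.2

section Kraus

variable {ι κ l m n : Type*} [Fintype ι] [Fintype n]

noncomputable def krausMap (A : ι → Matrix m n ℂ) :
    Matrix n n ℂ →ₗ[ℂ] Matrix m m ℂ where
  toFun X := ∑ r, A r * X * (A r)ᴴ
  map_add' X Y := by simp only [Matrix.mul_add, Matrix.add_mul, Finset.sum_add_distrib]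
  map_smul' c X := by
    simp only [Matrix.mul_smul, Matrix.smul_mul, Finset.smul_sum, RingHom.id_apply]

lemma krausMap_apply (A : ι → Matrix m n ℂ) (X : Matrix n n ℂ) :
    krausMap A X = ∑ r, A r * X * (A r)ᴴ := rfl

lemma krausMap_conjTranspose (A : ι → Matrix m n ℂ) (X : Matrix n n ℂ) :
    krausMap A Xᴴ = (krausMap A X)ᴴ := by
  simp only [krausMap_apply, conjTranspose_sum, conjTranspose_mul, conjTranspose_conjTranspose,
    Matrix.mul_assoc]

lemma krausMap_comp_krausMap [Fintype κ] [Fintype m] (B : κ → Matrix l m ℂ)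
    (A : ι → Matrix m n ℂ) :
    krausMap B ∘ₗ krausMap A = krausMap fun p : κ × ι => B p.1 * A p.2 := by
  ext X : 1
  simp only [LinearMap.comp_apply, krausMap_apply, Fintype.sum_prod_type, Matrix.mul_sum,
    Matrix.sum_mul, conjTranspose_mul, Matrix.mul_assoc]

lemma krausMap_single_apply [DecidableEq n] (A : ι → Matrix m n ℂ) (i j : n) (a b : m) :
    krausMap A (single i j 1) a b = ∑ r, A r a i * star (A r b j) := by
  simp [krausMap_apply, Matrix.sum_apply, Matrix.mul_apply, single, ite_and]

lemma exists_krausMap_eq_of_posSemidef_choi [Fintype κ] [DecidableEq ι]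
    {N : Matrix ι ι ℂ →ₗ[ℂ] Matrix κ κ ℂ} (h : (choi N).PosSemidef) :
    ∃ A : ι × κ → Matrix κ ι ℂ, N = krausMap A := by
  classical
  obtain ⟨B, hB⟩ : ∃ B : Matrix (ι × κ) (ι × κ) ℂ, choi N = Bᴴ * B := by
    open scoped Matrix.Norms.L2Operator MatrixOrder in
    exact CStarAlgebra.nonneg_iff_eq_star_mul_self.mp h.nonneg
  refine ⟨fun r => Matrix.of fun a i => star (B r (i, a)), ?_⟩
  apply Matrix.ext_linearMap
  intro i j
  refine LinearMap.ext_ring (ext fun a b => ?_)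
  simp only [LinearMap.comp_apply, singleLinearMap_apply, krausMap_single_apply, of_apply]
  exact (congrFun (congrFun hB (i, a)) (j, b)).trans (by simp [mul_apply, mul_comm])

lemma krausMap_eq_id_apply [DecidableEq n] {C : ι → Matrix n n ℂ}
    (h : krausMap C = LinearMap.id) (i j a b : n) :
    ∑ r, C r a i * star (C r b j) = single i j 1 a b := by
  rw [← krausMap_single_apply, h, LinearMap.id_apply]

lemma apply_eq_ite_of_krausMap_eq_id [DecidableEq n] {C : ι → Matrix n n ℂ}
    (h : krausMap C = LinearMap.id) (r : ι) (a i b : n) :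
    C r a i = if a = i then C r b b else 0 := by
  have hC := krausMap_eq_id_apply h
  split_ifs with hai
  · subst hai
    -- `∑ r, ‖C r a a - C r b b‖² = 1 - 1 - 1 + 1`
    suffices (fun r => C r a a - C r b b) ⬝ᵥ star (fun r => C r a a - C r b b) = 0 from
      sub_eq_zero.mp (congrFun (dotProduct_self_star_eq_zero.mp this) r)
    simp only [dotProduct, Pi.star_apply, star_sub, mul_sub, sub_mul, Finset.sum_sub_distrib, hC]
    simp
  · suffices (fun r => C r a i) ⬝ᵥ star (fun r => C r a i) = 0 from
      congrFun (dotProduct_self_star_eq_zero.mp this) r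
    simp only [dotProduct, Pi.star_apply, hC]
    simp [single, Ne.symm hai]

lemma exists_eq_smul_one_of_krausMap_eq_id [DecidableEq n] {C : ι → Matrix n n ℂ}
    (h : krausMap C = LinearMap.id) (r : ι) : ∃ c : ℂ, C r = c • 1 := by
  cases isEmpty_or_nonempty n with
  | inl _ => exact ⟨0, Subsingleton.elim _ _⟩
  | inr hn =>
    obtain ⟨b⟩ := hn
    refine ⟨C r b b, ?_⟩
    ext a i
    rw [apply_eq_ite_of_krausMap_eq_id h r a i b]
    simp [one_apply]

lemma exists_krausMap_smul_eq_conj (t : ι → ℂ) (A : Matrix m n ℂ) :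
    ∃ V : Matrix m n ℂ, ∀ X, krausMap (fun r => t r • A) X = V * X * Vᴴ := by
  have hτ : 0 ≤ ∑ r, Complex.normSq (t r) :=
    Finset.sum_nonneg fun r _ => Complex.normSq_nonneg _
  refine ⟨((√(∑ r, Complex.normSq (t r)) : ℝ) : ℂ) • A, fun X => ?_⟩
  simp only [krausMap_apply, conjTranspose_smul, Matrix.smul_mul, Matrix.mul_smul, smul_smul,
    ← Finset.sum_smul, Complex.star_def, Complex.conj_ofReal, ← Complex.ofReal_mul,
    Real.mul_self_sqrt hτ]
  push_cast
  simp only [Complex.normSq_eq_conj_mul_self]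

lemma exists_krausMap_eq_conj_of_comp_eq_id [Fintype κ] [DecidableEq n] {A : ι → Matrix n n ℂ}
    {B : κ → Matrix n n ℂ} (h : krausMap B ∘ₗ krausMap A = LinearMap.id) :
    ∃ V : Matrix n n ℂ, ∀ X, krausMap A X = V * X * Vᴴ := by
  rw [krausMap_comp_krausMap] at h
  choose c hc using exists_eq_smul_one_of_krausMap_eq_id h
  by_cases hzero : ∀ p, c p = 0
  · have hY : ∀ Y : Matrix n n ℂ, Y = 0 := fun Y => by
      rw [← LinearMap.id_apply (R := ℂ) Y, ← h, krausMap_apply]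
      simp [hc, hzero]
    exact ⟨0, fun X => (hY _).trans (hY _).symm⟩
  push Not at hzero
  obtain ⟨⟨s, r₀⟩, hs⟩ := hzero
  have hleft : ((c (s, r₀))⁻¹ • B s) * A r₀ = 1 := by
    rw [Matrix.smul_mul, hc (s, r₀), smul_smul, inv_mul_cancel₀ hs, one_smul]
  have hA : ∀ r, A r = ((c (s, r₀))⁻¹ * c (s, r)) • A r₀ := fun r => calc
    A r = A r₀ * ((c (s, r₀))⁻¹ • B s) * A r := by
        rw [mul_eq_one_comm.mp hleft, Matrix.one_mul]
    _ = A r₀ * ((c (s, r₀))⁻¹ • (B s * A r)) := by rw [Matrix.mul_assoc, Matrix.smul_mul]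
    _ = _ := by rw [hc (s, r), smul_smul, Matrix.mul_smul, Matrix.mul_one]
  obtain ⟨V, hV⟩ :=
    exists_krausMap_smul_eq_conj (fun r => (c (s, r₀))⁻¹ * c (s, r)) (A r₀)
  exact ⟨V, fun X => by rw [← hV]; exact congrArg (krausMap · X) (funext hA)⟩

end Kraus

lemma conjTranspose_mul_self_eq_one_of_trace_conj {m n : Type*} [Fintype m] [Fintype n]
    [DecidableEq n] {V : Matrix m n ℂ}
    (h : ∀ X : Matrix n n ℂ, trace (V * X * Vᴴ) = trace X) : Vᴴ * V = 1 := by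
  ext i j
  have hij := h (single j i 1)
  rwa [trace_mul_cycle, trace_mul_comm, trace_single_mul, ← Matrix.mul_one (single j i (1 : ℂ)),
    trace_single_mul, one_smul, one_smul] at hij

/-- the inverse of an invertible CPTP map that is not a unitary
conjugation is Hermitian-preserving and trace-preserving, but not completely
positive. -/
theorem inverse_of_CPTP_not_CP {d : ℕ}
    (E Einv : Matrix (Fin d) (Fin d) ℂ →ₗ[ℂ] Matrix (Fin d) (Fin d) ℂ)
    (hCP : IsCompletelyPositive E) (hTP : ∀ X, (E X).trace = X.trace)
    (hinv1 : Einv.comp E = LinearMap.id) (hinv2 : E.comp Einv = LinearMap.id)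
    (hnotU : ¬ ∃ U : Matrix (Fin d) (Fin d) ℂ,
        U ∈ Matrix.unitaryGroup (Fin d) ℂ ∧ ∀ X, E X = U * X * Uᴴ) :
    (∀ X, Einv Xᴴ = (Einv X)ᴴ) ∧ (∀ X, (Einv X).trace = X.trace) ∧
      ¬ IsCompletelyPositive Einv := by
  obtain ⟨A, rfl⟩ :=
    exists_krausMap_eq_of_posSemidef_choi (posSemidef_choi_of_isCompletelyPositive hCP)
  have hE_Einv X : krausMap A (Einv X) = X := LinearMap.congr_fun hinv2 X
  refine ⟨fun X => ?_, fun X => by rw [← hTP, hE_Einv], fun hCPinv => ?_⟩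
  · calc Einv Xᴴ = Einv (krausMap A (Einv X))ᴴ := by rw [hE_Einv]
      _ = (Einv X)ᴴ := by
        rw [← krausMap_conjTranspose, ← LinearMap.comp_apply Einv, hinv1, LinearMap.id_apply]
  obtain ⟨B, rfl⟩ :=
    exists_krausMap_eq_of_posSemidef_choi (posSemidef_choi_of_isCompletelyPositive hCPinv)
  obtain ⟨V, hV⟩ := exists_krausMap_eq_conj_of_comp_eq_id hinv1
  have hVV : Vᴴ * V = 1 :=
    conjTranspose_mul_self_eq_one_of_trace_conj fun X => by rw [← hV, hTP]
  exact hnotU ⟨V, mem_unitaryGroup_iff'.mpr hVV, hV⟩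
end

section
/- Let F(ρ) = Tr_Z(A ρ A†) for a matrix A : C^{d_X} → C^{d_Y} ⊗ C^{d_Z}. Then the partially transposed Choi matrix satisfies Λ_F^{T1} = (I_X ⊗ I_Y ⊗ ⟨Φ^+|)(I_X ⊗ A ⊗ I_Z)(S ⊗ I_{ZZ})(I_X ⊗ A† ⊗ I_Z)(I_X ⊗ I_Y ⊗ |Φ^+⟩), where S is the swap on C^{d_X} ⊗ C^{d_X} and |Φ^+⟩ = Σ_i |ii⟩ on C^{d_Z} ⊗ C^{d_Z}; consequently ‖Λ_F^{T1}‖_∞ ≤ ‖A‖_∞². -/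
/-!
Both sides of the identity have `((x, y), (x', y'))` entry `∑ z, A (y, z) x' * conj (A (y', z) x)`:
the swap `S` exchanges the two `X`-indices and `⟨Φ⁺|, |Φ⁺⟩` contract the two `Z`-indices, which is
exactly the partial trace over `Z` with the partial transpose on `X`. The same entries show
`Λ_F^{T1} = Pᴴ (P ∘ σ)` for `P = A ⊗ I_Y` and `σ` the permutation exchanging the two
`Y`-indices of its rows. Permuting rows preserves the operator norm and `‖A ⊗ I_Y‖ ≤ ‖A‖`
(apply `A` slice by slice), so `‖Λ_F^{T1}‖ ≤ ‖P‖² ≤ ‖A‖²`.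
-/

open Matrix MeasureTheory
open scoped Kronecker ComplexOrder

open scoped Matrix.Norms.L2Operator

namespace Matrix

variable {𝕜 m n p : Type*} [RCLike 𝕜] [Fintype m] [Fintype n] [Fintype p] [DecidableEq n]

lemma l2_opNorm_le_of_mulVec_le (B : Matrix m n 𝕜) {c : ℝ} (hc : 0 ≤ c)
    (h : ∀ x : EuclideanSpace 𝕜 n, ‖(EuclideanSpace.equiv m 𝕜).symm (B *ᵥ x)‖ ≤ c * ‖x‖) :
    ‖B‖ ≤ c :=
  ContinuousLinearMap.opNorm_le_bound _ hc h

lemma l2_opNorm_submatrix_equiv_left [DecidableEq m] (M : Matrix m n 𝕜) (σ : m ≃ m) :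
    ‖M.submatrix σ id‖ = ‖M‖ := by
  rw [← mul_self_inj (norm_nonneg _) (norm_nonneg _), ← l2_opNorm_conjTranspose_mul_self,
    ← l2_opNorm_conjTranspose_mul_self, conjTranspose_submatrix,
    submatrix_mul_equiv _ _ _ σ, submatrix_id_id]

lemma l2_opNorm_kronecker_one_le [DecidableEq p] (A : Matrix m n 𝕜) :
    ‖A ⊗ₖ (1 : Matrix p p 𝕜)‖ ≤ ‖A‖ := by
  refine l2_opNorm_le_of_mulVec_le _ (norm_nonneg A) fun x => ?_
  let slice (j : p) : EuclideanSpace 𝕜 n := WithLp.toLp 2 fun k => x (k, j)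
  have hx : ‖x‖ ^ 2 = ∑ j, ‖slice j‖ ^ 2 := by
    simp only [EuclideanSpace.norm_sq_eq, Fintype.sum_prod_type_right, slice]
  have hmul : ∀ i j, (A ⊗ₖ (1 : Matrix p p 𝕜) *ᵥ x) (i, j) = (A *ᵥ slice j) i := by
    intro i j
    simp [mulVec, dotProduct, one_apply, Fintype.sum_prod_type, slice]
  refine le_of_pow_le_pow_left₀ two_ne_zero (by positivity) ?_
  calc ‖(EuclideanSpace.equiv (m × p) 𝕜).symm (A ⊗ₖ (1 : Matrix p p 𝕜) *ᵥ x)‖ ^ 2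
      = ∑ j, ‖(EuclideanSpace.equiv m 𝕜).symm (A *ᵥ slice j)‖ ^ 2 := by
        simp only [EuclideanSpace.norm_sq_eq, Fintype.sum_prod_type_right]
        exact Finset.sum_congr rfl fun j _ =>
          Finset.sum_congr rfl fun i _ => congrArg (‖·‖ ^ 2) (hmul i j)
    _ ≤ ∑ j, (‖A‖ * ‖slice j‖) ^ 2 := by
        gcongr with j
        exact l2_opNorm_mulVec A (slice j)
    _ = (‖A‖ * ‖x‖) ^ 2 := by
        simp only [mul_pow, ← Finset.mul_sum, hx]

end Matrix

section Choi

variable {ι κ μ : Type*} [Fintype ι] [DecidableEq ι] [Fintype μ]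

lemma choiT1_apply_of_eq_partialTrace (A : Matrix (κ × μ) ι ℂ)
    {F : Matrix ι ι ℂ →ₗ[ℂ] Matrix κ κ ℂ}
    (hF : ∀ ρ, F ρ = Matrix.of fun y y' => ∑ z : μ, (A * ρ * Aᴴ) (y, z) (y', z)) (p q : ι × κ) :
    choiT1 F p q = ∑ z, A (p.2, z) q.1 * star (A (q.2, z) p.1) := by
  simp [choiT1, ptrans1, choi, hF, mul_apply, single, ite_and]

@[simps]
def swapOuter (κ μ : Type*) : Equiv.Perm ((κ × μ) × κ) where
  toFun r := ((r.2, r.1.2), r.1.1)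
  invFun r := ((r.2, r.1.2), r.1.1)

variable [Fintype κ] [DecidableEq κ]

lemma choiT1_eq_conjTranspose_mul_submatrix (A : Matrix (κ × μ) ι ℂ)
    {F : Matrix ι ι ℂ →ₗ[ℂ] Matrix κ κ ℂ}
    (hF : ∀ ρ, F ρ = Matrix.of fun y y' => ∑ z : μ, (A * ρ * Aᴴ) (y, z) (y', z)) :
    choiT1 F =
      (A ⊗ₖ (1 : Matrix κ κ ℂ))ᴴ * (A ⊗ₖ (1 : Matrix κ κ ℂ)).submatrix (swapOuter κ μ) id := by
  ext p q
  rw [choiT1_apply_of_eq_partialTrace A hF]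
  simp [mul_apply, one_apply, Fintype.sum_prod_type, apply_ite, mul_comm]

end Choi

section Sandwich

variable {ι κ μ : Type*} [Fintype ι] [DecidableEq ι] [Fintype κ] [DecidableEq κ]
  [Fintype μ] [DecidableEq μ]

lemma stinespring_sandwich_apply (A : Matrix (κ × μ) ι ℂ)
    {L : Matrix (ι × κ) (ι × κ × μ × μ) ℂ}
    (hL : ∀ p q, L p q = if p.1 = q.1 ∧ p.2 = q.2.1 ∧ q.2.2.1 = q.2.2.2 then 1 else 0)
    {M₁ : Matrix (ι × κ × μ × μ) (ι × ι × μ) ℂ}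
    (hM₁ : ∀ p q, M₁ p q = if p.1 = q.1 ∧ p.2.2.2 = q.2.2 then A (p.2.1, p.2.2.1) q.2.1 else 0)
    {Mid : Matrix (ι × ι × μ) (ι × ι × μ) ℂ}
    (hMid : ∀ p q, Mid p q = if p.1 = q.2.1 ∧ p.2.1 = q.1 ∧ p.2.2 = q.2.2 then 1 else 0)
    {M₂ : Matrix (ι × ι × μ) (ι × κ × μ × μ) ℂ}
    (hM₂ : ∀ p q, M₂ p q =
      if p.1 = q.1 ∧ p.2.2 = q.2.2.2 then star (A (q.2.1, q.2.2.1) p.2.1) else 0)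
    {Rm : Matrix (ι × κ × μ × μ) (ι × κ) ℂ}
    (hRm : ∀ p q, Rm p q = if p.1 = q.1 ∧ p.2.1 = q.2 ∧ p.2.2.1 = p.2.2.2 then 1 else 0)
    (p q : ι × κ) :
    (L * M₁ * Mid * M₂ * Rm) p q = ∑ z, A (p.2, z) q.1 * star (A (q.2, z) p.1) := by
  have h₁ : ∀ p q, (L * M₁) p q = if p.1 = q.1 then A (p.2, q.2.2) q.2.1 else 0 := by
    intro p q
    simp [mul_apply, hL, hM₁, Fintype.sum_prod_type, ite_and]
  have h₂ : ∀ p q, (L * M₁ * Mid) p q = if p.1 = q.2.1 then A (p.2, q.2.2) q.1 else 0 := by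
    intro p q
    rw [mul_apply]
    simp [h₁, hMid, Fintype.sum_prod_type, ite_and]
  have h₃ : ∀ p q,
      (L * M₁ * Mid * M₂) p q = A (p.2, q.2.2.2) q.1 * star (A (q.2.1, q.2.2.1) p.1) := by
    intro p q
    rw [mul_apply]
    simp [h₂, hM₂, Fintype.sum_prod_type, ite_and]
  rw [mul_apply]
  simp [h₃, hRm, Fintype.sum_prod_type, ite_and]

end Sandwich

/-- for `F(ρ) = Tr_Z(A ρ A†)` with `A : ℂ^{d_X} → ℂ^{d_Y} ⊗ ℂ^{d_Z}`,
`Λ_F^{T1} = (I_X ⊗ I_Y ⊗ ⟨Φ⁺|)(I_X ⊗ A ⊗ I_Z)(S ⊗ I_Z)(I_X ⊗ A† ⊗ I_Z)(I_X ⊗ I_Y ⊗ |Φ⁺⟩)`,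
and consequently `‖Λ_F^{T1}‖_∞ ≤ ‖A‖_∞²`. -/
theorem choiT1_stinespring {dX dY dZ : ℕ}
    (A : Matrix (Fin dY × Fin dZ) (Fin dX) ℂ)
    (F : Matrix (Fin dX) (Fin dX) ℂ →ₗ[ℂ] Matrix (Fin dY) (Fin dY) ℂ)
    (hF : ∀ ρ, F ρ = Matrix.of fun y y' => ∑ z : Fin dZ, (A * ρ * Aᴴ) (y, z) (y', z))
    -- `L = I_X ⊗ I_Y ⊗ ⟨Φ⁺|`
    (L : Matrix (Fin dX × Fin dY) (Fin dX × Fin dY × Fin dZ × Fin dZ) ℂ)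
    (hL : ∀ p q, L p q =
      if p.1 = q.1 ∧ p.2 = q.2.1 ∧ q.2.2.1 = q.2.2.2 then 1 else 0)
    -- `M₁ = I_X ⊗ A ⊗ I_Z`
    (M₁ : Matrix (Fin dX × Fin dY × Fin dZ × Fin dZ) (Fin dX × Fin dX × Fin dZ) ℂ)
    (hM₁ : ∀ p q, M₁ p q =
      if p.1 = q.1 ∧ p.2.2.2 = q.2.2 then A (p.2.1, p.2.2.1) q.2.1 else 0)
    -- `Mid = S ⊗ I_Z`, with `S` the swap on `ℂ^{d_X} ⊗ ℂ^{d_X}`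
    (Mid : Matrix (Fin dX × Fin dX × Fin dZ) (Fin dX × Fin dX × Fin dZ) ℂ)
    (hMid : ∀ p q, Mid p q =
      if p.1 = q.2.1 ∧ p.2.1 = q.1 ∧ p.2.2 = q.2.2 then 1 else 0)
    -- `M₂ = I_X ⊗ A† ⊗ I_Z`
    (M₂ : Matrix (Fin dX × Fin dX × Fin dZ) (Fin dX × Fin dY × Fin dZ × Fin dZ) ℂ)
    (hM₂ : ∀ p q, M₂ p q =
      if p.1 = q.1 ∧ p.2.2 = q.2.2.2 then star (A (q.2.1, q.2.2.1) p.2.1) else 0)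
    -- `Rm = I_X ⊗ I_Y ⊗ |Φ⁺⟩`
    (Rm : Matrix (Fin dX × Fin dY × Fin dZ × Fin dZ) (Fin dX × Fin dY) ℂ)
    (hRm : ∀ p q, Rm p q =
      if p.1 = q.1 ∧ p.2.1 = q.2 ∧ p.2.2.1 = p.2.2.2 then 1 else 0) :
    choiT1 F = L * M₁ * Mid * M₂ * Rm ∧ opNorm (choiT1 F) ≤ opNorm A ^ 2 := by
  refine ⟨Matrix.ext fun p q => ?_, ?_⟩
  · rw [choiT1_apply_of_eq_partialTrace A hF,
      stinespring_sandwich_apply A hL hM₁ hMid hM₂ hRm]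
  set P := A ⊗ₖ (1 : Matrix (Fin dY) (Fin dY) ℂ)
  calc opNorm (choiT1 F) = ‖Pᴴ * P.submatrix (swapOuter _ _) id‖ := by
        rw [choiT1_eq_conjTranspose_mul_submatrix A hF]; rfl
    _ ≤ ‖Pᴴ‖ * ‖P.submatrix (swapOuter _ _) id‖ := l2_opNorm_mul _ _
    _ = ‖P‖ * ‖P‖ := by rw [l2_opNorm_conjTranspose, l2_opNorm_submatrix_equiv_left]
    _ ≤ ‖A‖ * ‖A‖ := mul_self_le_mul_self (norm_nonneg _) (l2_opNorm_kronecker_one_le A)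
    _ = opNorm A ^ 2 := (sq _).symm
end
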